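/- arXiv:2411.03573 — 5 statements merged into one kernel-verified Lean document; each statement's English description precedes it below -/
import Mathlib

section
/- Let S be a perfect commutative ring of characteristic p (the Frobenius x ↦ x^p is bijective) and let f ∈ S be a nonzerodivisor. Then the tilt of S/f, namely the inverse limit of S/f along the Frobenius map, is canonically isomorphic to the f-adic completion of S: lim_{φ} S/f ≅ lim_n S/(f^n). -/
/-!
Since `S` is perfect, `x ↦ x ^ p ^ n` is an automorphism of `S` carrying `(f)` onto
`(f ^ p ^ n) = (f) ^ p ^ n`, so it induces isomorphisms `S/f ≃ S/f^(p^n)`. Under these, the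
Frobenius of `S/f` at level `n + 1` becomes the projection `S/f^(p^(n+1)) → S/f^(p^n)`, so the tilt
of `S/f` is the limit of `S/f^(p^n)`; as `n ≤ p ^ n`, that is the `f`-adic completion of `S`.
-/

theorem Perfection.coeff_pow_p_pow_sub {R : Type*} [CommSemiring R] (p : ℕ) [Fact p.Prime]
    [CharP R p] (g : Perfection R p) {m n : ℕ} (hmn : m ≤ n) :
    coeff R p n g ^ p ^ (n - m) = coeff R p m g := by
  obtain ⟨k, rfl⟩ := Nat.exists_eq_add_of_le hmn
  rw [Nat.add_sub_cancel_left]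
  exact coeffMonoidHom_pow_p_pow' g m k

theorem AdicCompletion.factorPow_evalₐ {R : Type*} [CommRing R] (I : Ideal R) {m n : ℕ}
    (hmn : m ≤ n) (x : AdicCompletion I R) :
    Ideal.Quotient.factorPow I hmn (evalₐ I n x) = evalₐ I m x := by
  induction x using AdicCompletion.induction_on with
  | h y => simpa [Ideal.Quotient.factor_mk] using AdicCompletion.Ideal.mk_eq_mk I hmn y

section PerfectRing

variable (p : ℕ) {S : Type*} [CommRing S] [ExpChar S p] [PerfectRing S p] (f : S)

noncomputable def quotientSpanIterateFrobeniusEquiv (n : ℕ) :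
    S ⧸ Ideal.span {f} ≃+* S ⧸ Ideal.span {f} ^ p ^ n :=
  Ideal.quotientEquiv _ _ (iterateFrobeniusEquiv S p n) <| by
    rw [Ideal.map_span, Set.image_singleton, Ideal.span_singleton_pow]
    rfl

local notation "e" => quotientSpanIterateFrobeniusEquiv p f

theorem quotientSpanIterateFrobeniusEquiv_mk (n : ℕ) (a : S) :
    e n (Ideal.Quotient.mk _ a) = Ideal.Quotient.mk _ (a ^ p ^ n) :=
  rfl

theorem factorPow_quotientSpanIterateFrobeniusEquiv {m n : ℕ} (hmn : m ≤ n)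
    (z : S ⧸ Ideal.span {f}) :
    Ideal.Quotient.factorPow (Ideal.span {f}) (Nat.pow_le_pow_right (expChar_pos S p) hmn)
        (e n z) = e m (z ^ p ^ (n - m)) := by
  obtain ⟨a, rfl⟩ := Ideal.Quotient.mk_surjective z
  rw [← map_pow, quotientSpanIterateFrobeniusEquiv_mk, quotientSpanIterateFrobeniusEquiv_mk,
    Ideal.Quotient.factor_mk, ← pow_mul, ← pow_add, Nat.sub_add_cancel hmn]

noncomputable def adicCompletionCoeff (n : ℕ) :
    AdicCompletion (Ideal.span {f}) S →+* S ⧸ Ideal.span {f} :=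
  (e n).symm.toRingHom.comp (AdicCompletion.evalₐ _ (p ^ n)).toRingHom

theorem adicCompletionCoeff_succ_pow (n : ℕ) (x : AdicCompletion (Ideal.span {f}) S) :
    adicCompletionCoeff p f (n + 1) x ^ p = adicCompletionCoeff p f n x := by
  set z := adicCompletionCoeff p f (n + 1) x
  have hz : AdicCompletion.evalₐ _ (p ^ (n + 1)) x = e (n + 1) z :=
    ((e (n + 1)).apply_symm_apply _).symm
  have := factorPow_quotientSpanIterateFrobeniusEquiv p f (Nat.le_add_right n 1) z
  rw [← hz, AdicCompletion.factorPow_evalₐ, Nat.add_sub_cancel_left, pow_one] at this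
  simp [adicCompletionCoeff, this]

variable [Fact p.Prime] [CharP (S ⧸ Ideal.span {f}) p]

noncomputable def adicCompletionToPerfection :
    AdicCompletion (Ideal.span {f}) S →+* Perfection (S ⧸ Ideal.span {f}) p where
  toFun x := ⟨fun n ↦ adicCompletionCoeff p f n x, fun n ↦ adicCompletionCoeff_succ_pow p f n x⟩
  map_one' := Subtype.ext <| funext fun n ↦ map_one (adicCompletionCoeff p f n)
  map_mul' x y := Subtype.ext <| funext fun n ↦ map_mul (adicCompletionCoeff p f n) x y
  map_zero' := Subtype.ext <| funext fun n ↦ map_zero (adicCompletionCoeff p f n)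
  map_add' x y := Subtype.ext <| funext fun n ↦ map_add (adicCompletionCoeff p f n) x y

theorem coeff_adicCompletionToPerfection (n : ℕ) (x : AdicCompletion (Ideal.span {f}) S) :
    Perfection.coeff _ p n (adicCompletionToPerfection p f x) =
      (e n).symm (AdicCompletion.evalₐ _ (p ^ n) x) :=
  rfl

noncomputable def perfectionToQuotientPow (m : ℕ) :
    Perfection (S ⧸ Ideal.span {f}) p →+* S ⧸ Ideal.span {f} ^ m :=
  (Ideal.Quotient.factorPow _ (Nat.lt_pow_self (Fact.out : p.Prime).one_lt).le).comp
    ((e m).toRingHom.comp (Perfection.coeff _ p m))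

theorem factorPow_comp_perfectionToQuotientPow {m n : ℕ} (hmn : m ≤ n) :
    (Ideal.Quotient.factorPow _ hmn).comp (perfectionToQuotientPow p f n) =
      perfectionToQuotientPow p f m := by
  ext g
  have := factorPow_quotientSpanIterateFrobeniusEquiv p f hmn (Perfection.coeff _ p n g)
  simp only [perfectionToQuotientPow, RingHom.comp_apply, RingEquiv.toRingHom_eq_coe,
    RingEquiv.coe_toRingHom, ← Perfection.coeff_pow_p_pow_sub p g hmn, ← this,
    Ideal.Quotient.factor_comp_apply]

noncomputable def perfectionToAdicCompletion :
    Perfection (S ⧸ Ideal.span {f}) p →+* AdicCompletion (Ideal.span {f}) S :=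
  AdicCompletion.liftRingHom _ (perfectionToQuotientPow p f)
    (factorPow_comp_perfectionToQuotientPow p f)

theorem evalₐ_perfectionToAdicCompletion (m : ℕ) (g : Perfection (S ⧸ Ideal.span {f}) p) :
    AdicCompletion.evalₐ _ m (perfectionToAdicCompletion p f g) =
      Ideal.Quotient.factorPow _ (Nat.lt_pow_self (Fact.out : p.Prime).one_lt).le
        (e m (Perfection.coeff _ p m g)) :=
  AdicCompletion.evalₐ_liftRingHom _ _ _ _ _

theorem adicCompletionToPerfection_comp_perfectionToAdicCompletion :
    (adicCompletionToPerfection p f).comp (perfectionToAdicCompletion p f) = RingHom.id _ := by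
  refine RingHom.ext fun g ↦ Perfection.ext fun n ↦ ?_
  have hn : n ≤ p ^ n := (Nat.lt_pow_self (Fact.out : p.Prime).one_lt).le
  rw [RingHom.comp_apply, coeff_adicCompletionToPerfection, evalₐ_perfectionToAdicCompletion,
    factorPow_quotientSpanIterateFrobeniusEquiv p f hn, RingEquiv.symm_apply_apply,
    Perfection.coeff_pow_p_pow_sub p g hn, RingHom.id_apply]

theorem perfectionToAdicCompletion_comp_adicCompletionToPerfection :
    (perfectionToAdicCompletion p f).comp (adicCompletionToPerfection p f) = RingHom.id _ := by
  refine RingHom.ext fun x ↦ AdicCompletion.ext_evalₐ fun m ↦ ?_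
  rw [RingHom.comp_apply, evalₐ_perfectionToAdicCompletion, coeff_adicCompletionToPerfection,
    RingEquiv.apply_symm_apply, AdicCompletion.factorPow_evalₐ, RingHom.id_apply]

noncomputable def perfectionEquivAdicCompletion :
    Perfection (S ⧸ Ideal.span {f}) p ≃+* AdicCompletion (Ideal.span {f}) S :=
  RingEquiv.ofRingHom (perfectionToAdicCompletion p f) (adicCompletionToPerfection p f)
    (perfectionToAdicCompletion_comp_adicCompletionToPerfection p f)
    (adicCompletionToPerfection_comp_perfectionToAdicCompletion p f)

end PerfectRing

theorem stmt2_general (p : ℕ) [Fact p.Prime] {S : Type*} [CommRing S] [CharP S p]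
    (hperf : Function.Bijective (fun x : S => x ^ p))
    (f : S)
    [CharP (S ⧸ Ideal.span {f}) p] :
    Nonempty ((Perfection (S ⧸ Ideal.span {f}) p) ≃+*
      (AdicCompletion (Ideal.span {f}) S)) :=
  have : PerfectRing S p := ⟨hperf⟩
  ⟨perfectionEquivAdicCompletion p f⟩

/-- For `S` a perfect ring of characteristic `p` and `f` a nonzerodivisor, the tilt of
`S/f` (the inverse limit along Frobenius) is isomorphic to the `f`-adic completion of `S`. -/
theorem stmt2 (p : ℕ) [Fact p.Prime] {S : Type*} [CommRing S] [CharP S p]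
    (hperf : Function.Bijective (fun x : S => x ^ p))
    (f : S) (hf : f ∈ nonZeroDivisors S)
    [CharP (S ⧸ Ideal.span {f}) p] :
    Nonempty ((Perfection (S ⧸ Ideal.span {f}) p) ≃+*
      (AdicCompletion (Ideal.span {f}) S)) :=
  stmt2_general p hperf f
end

section
/- Let B be a nonarchimedean commutative Banach ring. The following are equivalent: (1) the norm on B is equivalent to some power-multiplicative norm; (2) for every integer m > 1 there exists c > 0 with |x^m| ≥ c |x|^m for all x ∈ B; (3) there exists c > 0 with |x|_sp ≥ c |x| for all x ∈ B, where |x|_sp = lim_n |x^n|^{1/n}. -/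
/-- A (nonarchimedean, commutative) Banach ring norm. -/
structure IsNABanach {B : Type*} [CommRing B] (nm : B → ℝ) : Prop where
  nonneg : ∀ x, 0 ≤ nm x
  eq_zero_iff : ∀ x, nm x = 0 ↔ x = 0
  nonarch : ∀ x y, nm (x - y) ≤ max (nm x) (nm y)
  submul : ∀ x y, nm (x * y) ≤ nm x * nm y
  complete : ∀ u : ℕ → B,
    (∀ ε : ℝ, 0 < ε → ∃ N, ∀ m ≥ N, ∀ n ≥ N, nm (u m - u n) < ε) →
    ∃ x, ∀ ε : ℝ, 0 < ε → ∃ N, ∀ n ≥ N, nm (u n - x) < ε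

/-- A nonarchimedean submultiplicative ring norm (no completeness required). -/
structure IsNARingNorm {B : Type*} [CommRing B] (nm : B → ℝ) : Prop where
  nonneg : ∀ x, 0 ≤ nm x
  eq_zero_iff : ∀ x, nm x = 0 ↔ x = 0
  nonarch : ∀ x y, nm (x - y) ≤ max (nm x) (nm y)
  submul : ∀ x y, nm (x * y) ≤ nm x * nm y

/-!
The spectral seminorm `|x|_sp` is Mathlib's `smoothingFun μ x = ⨅ n : ℕ+, μ (x ^ n) ^ (1 / n)`;
it is always power-multiplicative and bounded by `μ`. If it dominates `c * μ`, then
`μ (x ^ n) ≤ A * |x|_sp ^ n`, and since `a ^ n ≤ K * M ^ n` for all `n` forces `a ≤ M`, the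
nonarchimedean and submultiplicative inequalities pass from `μ` to `|·|_sp` by applying them to
`n`-th powers: this is (3) ⇒ (1).
For (2) ⇒ (3) only `m = 2` is needed: iterating gives `(c μ x) ^ 2 ^ k ≤ c μ (x ^ 2 ^ k)`, and
`x ^ 2 ^ k = x ^ n * x ^ (2 ^ k - n)` with `n < 2 ^ k ≤ 2 n` transfers this to `x ^ n` with a loss
of at most `c ^ (2 n)`.
-/

open Filter Topology

namespace IsNARingNorm

variable {B : Type*} [CommRing B] {nm : B → ℝ}

lemma map_zero (h : IsNARingNorm nm) : nm 0 = 0 := (h.eq_zero_iff 0).2 rfl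

lemma map_neg (h : IsNARingNorm nm) (x : B) : nm (-x) = nm x := by
  have neg_le (y : B) : nm (-y) ≤ nm y := by
    simpa [h.map_zero, h.nonneg y] using h.nonarch 0 y
  exact le_antisymm (neg_le x) (by simpa using neg_le (-x))

lemma isNonarchimedean (h : IsNARingNorm nm) : IsNonarchimedean nm := fun x y => by
  simpa [h.map_neg] using h.nonarch x (-y)

def toRingSeminorm (h : IsNARingNorm nm) : RingSeminorm B where
  toFun := nm
  map_zero' := h.map_zero
  add_le' _ _ := h.isNonarchimedean.add_le h.nonneg
  neg' := h.map_neg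
  mul_le' := h.submul

end IsNARingNorm

lemma le_of_forall_pow_le_mul_pow {a M K : ℝ} (hM : 0 ≤ M)
    (h : ∀ n : ℕ, 1 ≤ n → a ^ n ≤ K * M ^ n) : a ≤ M := by
  by_contra! hlt
  have ha : 0 < a := hM.trans_lt hlt
  have hlim : Tendsto (fun n : ℕ => K * (M / a) ^ n) atTop (𝓝 0) := by
    simpa using (tendsto_pow_atTop_nhds_zero_of_lt_one (div_nonneg hM ha.le)
      ((div_lt_one ha).2 hlt)).const_mul K
  obtain ⟨n, hn1, hn⟩ :=
    ((eventually_ge_atTop 1).and (hlim.eventually (gt_mem_nhds one_pos))).exists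
  rw [div_pow, ← mul_div_assoc, div_lt_one (pow_pos ha n)] at hn
  exact (h n hn1).not_gt hn

lemma IsNABanach.toIsNARingNorm {B : Type*} [CommRing B] {nm : B → ℝ} (h : IsNABanach nm) :
    IsNARingNorm nm :=
  ⟨h.nonneg, h.eq_zero_iff, h.nonarch, h.submul⟩

lemma exists_mul_pow_le_of_isPowMul {R : Type*} [Monoid R] {f g : R → ℝ} (hf : ∀ x, 0 ≤ f x)
    (hg : IsPowMul g) {c C : ℝ} (hc : 0 < c) (hC : 0 < C)
    (hfg : ∀ x, c * g x ≤ f x ∧ f x ≤ C * g x) {m : ℕ} (hm : 1 ≤ m) :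
    ∃ c', 0 < c' ∧ ∀ x, c' * f x ^ m ≤ f (x ^ m) := by
  refine ⟨c / C ^ m, by positivity, fun x => ?_⟩
  have hfx : f x / C ≤ g x := by
    rw [div_le_iff₀ hC, mul_comm]
    exact (hfg x).2
  calc c / C ^ m * f x ^ m = c * (f x / C) ^ m := by rw [div_pow]; ring
    _ ≤ c * g x ^ m := by gcongr; exact div_nonneg (hf x) hC.le
    _ = c * g (x ^ m) := by rw [hg x hm]
    _ ≤ f (x ^ m) := (hfg _).1

namespace RingSeminorm

variable {R : Type*} [CommRing R] (μ : RingSeminorm R)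

lemma smoothingFun_nonneg (x : R) : 0 ≤ smoothingFun μ x :=
  le_ciInf fun _ => by positivity

lemma smoothingFun_le_of_one_le (x : R) {n : ℕ} (hn : 1 ≤ n) :
    smoothingFun μ x ≤ μ (x ^ n) ^ (1 / (n : ℝ)) :=
  smoothingFun_le μ x ⟨n, hn⟩

lemma isPowMul_smoothingFun : IsPowMul (smoothingFun μ) := by
  intro x m hm
  have hm0 : 0 < (m : ℝ) := by positivity
  refine le_antisymm ?_ ?_
  · have hroot : smoothingFun μ (x ^ m) ^ (m : ℝ)⁻¹ ≤ smoothingFun μ x := by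
      refine le_ciInf fun n => ?_
      rw [Real.rpow_inv_le_iff_of_pos (smoothingFun_nonneg μ _) (by positivity) hm0,
        Real.rpow_natCast]
      calc smoothingFun μ (x ^ m) ≤ μ ((x ^ m) ^ (n : ℕ)) ^ (1 / (n : ℝ)) := smoothingFun_le μ _ n
        _ ≤ (μ (x ^ (n : ℕ)) ^ m) ^ (1 / (n : ℝ)) := by
          rw [← pow_mul, mul_comm, pow_mul]
          gcongr
          exact map_pow_le_pow μ _ (by omega)
        _ = (μ (x ^ (n : ℕ)) ^ (1 / (n : ℝ))) ^ m := by
          rw [← Real.rpow_natCast, ← Real.rpow_natCast, ← Real.rpow_mul (by positivity),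
            ← Real.rpow_mul (by positivity), mul_comm]
    calc smoothingFun μ (x ^ m) = (smoothingFun μ (x ^ m) ^ (m : ℝ)⁻¹) ^ m :=
          (Real.rpow_inv_natCast_pow (smoothingFun_nonneg μ _) (by omega)).symm
      _ ≤ smoothingFun μ x ^ m := by
        gcongr
        exact Real.rpow_nonneg (smoothingFun_nonneg μ _) _
  · refine le_ciInf fun n => ?_
    calc smoothingFun μ x ^ m ≤ (μ (x ^ (m * n)) ^ (1 / ((m * n : ℕ) : ℝ))) ^ m := by
          gcongr
          · exact smoothingFun_nonneg μ x
          · exact smoothingFun_le_of_one_le μ x (one_le_mul hm n.pos)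
      _ = μ ((x ^ m) ^ (n : ℕ)) ^ (1 / (n : ℝ)) := by
        rw [pow_mul, ← Real.rpow_natCast, ← Real.rpow_mul (by positivity)]
        congr 1
        push_cast
        field_simp

lemma smoothingFun_neg (x : R) : smoothingFun μ (-x) = smoothingFun μ x := by
  unfold smoothingFun
  congr! 3 with n
  rcases neg_one_pow_eq_or R (n : ℕ) with h | h <;> simp [neg_pow, h]

variable {μ} {c : ℝ}

lemma map_pow_le_mul_smoothingFun_pow (hc0 : 0 < c) (hc : ∀ x, c * μ x ≤ smoothingFun μ x)
    (x : R) (n : ℕ) : μ (x ^ n) ≤ max c⁻¹ (μ 1) * smoothingFun μ x ^ n := by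
  rcases Nat.eq_zero_or_pos n with rfl | hn
  · simp
  calc μ (x ^ n) ≤ c⁻¹ * smoothingFun μ (x ^ n) := by
        rw [le_inv_mul_iff₀ hc0]
        exact hc _
    _ = c⁻¹ * smoothingFun μ x ^ n := by rw [isPowMul_smoothingFun μ x hn]
    _ ≤ max c⁻¹ (μ 1) * smoothingFun μ x ^ n := by
        gcongr
        · exact pow_nonneg (smoothingFun_nonneg μ x) n
        · exact le_max_left _ _

lemma smoothingFun_mul_le (hc0 : 0 < c) (hc : ∀ x, c * μ x ≤ smoothingFun μ x) (x y : R) :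
    smoothingFun μ (x * y) ≤ smoothingFun μ x * smoothingFun μ y := by
  set A := max c⁻¹ (μ 1)
  have hA : 0 ≤ A := (inv_pos.2 hc0).le.trans (le_max_left _ _)
  refine le_of_forall_pow_le_mul_pow (K := A ^ 2)
    (mul_nonneg (smoothingFun_nonneg μ x) (smoothingFun_nonneg μ y)) fun n hn => ?_
  calc smoothingFun μ (x * y) ^ n = smoothingFun μ (x ^ n * y ^ n) := by
        rw [← isPowMul_smoothingFun μ _ hn, mul_pow]
    _ ≤ μ (x ^ n) * μ (y ^ n) := (smoothingFun_le_self μ _).trans (map_mul_le_mul μ _ _)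
    _ ≤ (A * smoothingFun μ x ^ n) * (A * smoothingFun μ y ^ n) :=
        mul_le_mul (map_pow_le_mul_smoothingFun_pow hc0 hc x n)
          (map_pow_le_mul_smoothingFun_pow hc0 hc y n) (apply_nonneg μ _)
          (mul_nonneg hA (pow_nonneg (smoothingFun_nonneg μ x) n))
    _ = A ^ 2 * (smoothingFun μ x * smoothingFun μ y) ^ n := by ring

lemma isNonarchimedean_smoothingFun (hna : IsNonarchimedean μ) (hc0 : 0 < c)
    (hc : ∀ x, c * μ x ≤ smoothingFun μ x) : IsNonarchimedean (smoothingFun μ) := by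
  intro x y
  set A := max c⁻¹ (μ 1)
  set M := max (smoothingFun μ x) (smoothingFun μ y)
  have hA : 0 ≤ A := (inv_pos.2 hc0).le.trans (le_max_left _ _)
  have hM : 0 ≤ M := (smoothingFun_nonneg μ x).trans (le_max_left _ _)
  refine le_of_forall_pow_le_mul_pow (K := A ^ 2) hM fun n hn => ?_
  obtain ⟨m, hm, hadd⟩ := hna.add_pow_le n x y
  calc smoothingFun μ (x + y) ^ n ≤ μ ((x + y) ^ n) := by
        rw [← isPowMul_smoothingFun μ _ hn]
        exact smoothingFun_le_self μ _
    _ ≤ μ (x ^ m) * μ (y ^ (n - m)) := hadd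
    _ ≤ (A * M ^ m) * (A * M ^ (n - m)) := by
        gcongr
        · exact (map_pow_le_mul_smoothingFun_pow hc0 hc x m).trans
            (by gcongr; exacts [smoothingFun_nonneg μ x, le_max_left _ _])
        · exact (map_pow_le_mul_smoothingFun_pow hc0 hc y _).trans
            (by gcongr; exacts [smoothingFun_nonneg μ y, le_max_right _ _])
    _ = A ^ 2 * M ^ n := by
        rw [mul_mul_mul_comm, ← pow_add, Nat.add_sub_cancel' (by omega), sq]

lemma mul_pow_two_pow_le (hc : 0 ≤ c) (hsq : ∀ x, c * μ x ^ 2 ≤ μ (x ^ 2)) (x : R) (k : ℕ) :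
    (c * μ x) ^ 2 ^ k ≤ c * μ (x ^ 2 ^ k) := by
  induction k with
  | zero => simp
  | succ k ih =>
    calc (c * μ x) ^ 2 ^ (k + 1) = ((c * μ x) ^ 2 ^ k) ^ 2 := by rw [pow_succ, pow_mul]
      _ ≤ (c * μ (x ^ 2 ^ k)) ^ 2 := by gcongr
      _ = c * (c * μ (x ^ 2 ^ k) ^ 2) := by ring
      _ ≤ c * μ ((x ^ 2 ^ k) ^ 2) := by gcongr; exact hsq _
      _ = c * μ (x ^ 2 ^ (k + 1)) := by rw [← pow_mul, ← pow_succ]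

lemma mul_pow_le_map_pow_of_sq (hc0 : 0 ≤ c) (hc1 : c ≤ 1)
    (hsq : ∀ x, c * μ x ^ 2 ≤ μ (x ^ 2)) (x : R) {n : ℕ} (hn : 1 ≤ n) :
    (c ^ 2 * μ x) ^ n ≤ μ (x ^ n) := by
  rcases (apply_nonneg μ x).eq_or_lt with hx | hx
  · rw [← hx, mul_zero, zero_pow (by omega)]
    exact apply_nonneg μ _
  set k := Nat.log 2 n + 1
  have hnk : n < 2 ^ k := Nat.lt_pow_succ_log_self one_lt_two n
  have hkn : 2 ^ k ≤ 2 * n := by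
    rw [pow_succ, mul_comm]
    exact Nat.mul_le_mul_left 2 (Nat.pow_log_le_self 2 (by omega))
  have hsplit : c ^ 2 ^ k * μ x ^ n * μ x ^ (2 ^ k - n) ≤ μ (x ^ n) * μ x ^ (2 ^ k - n) :=
    calc c ^ 2 ^ k * μ x ^ n * μ x ^ (2 ^ k - n) = (c * μ x) ^ 2 ^ k := by
          rw [mul_assoc, ← pow_add, Nat.add_sub_cancel' hnk.le, mul_pow]
      _ ≤ c * μ (x ^ 2 ^ k) := mul_pow_two_pow_le hc0 hsq x k
      _ ≤ μ (x ^ n * x ^ (2 ^ k - n)) := by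
          rw [← pow_add, Nat.add_sub_cancel' hnk.le]
          exact mul_le_of_le_one_left (apply_nonneg μ _) hc1
      _ ≤ μ (x ^ n) * μ x ^ (2 ^ k - n) := by
          refine (map_mul_le_mul μ _ _).trans ?_
          gcongr
          exact map_pow_le_pow μ x (by omega)
  calc (c ^ 2 * μ x) ^ n = c ^ (2 * n) * μ x ^ n := by rw [mul_pow, ← pow_mul]
    _ ≤ c ^ 2 ^ k * μ x ^ n :=
        mul_le_mul_of_nonneg_right (pow_le_pow_of_le_one hc0 hc1 hkn) (by positivity)
    _ ≤ μ (x ^ n) := le_of_mul_le_mul_right hsplit (pow_pos hx _)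

lemma exists_mul_le_smoothingFun_of_sq (h : ∃ c, 0 < c ∧ ∀ x, c * μ x ^ 2 ≤ μ (x ^ 2)) :
    ∃ c, 0 < c ∧ ∀ x, c * μ x ≤ smoothingFun μ x := by
  obtain ⟨c, hc0, hc⟩ := h
  set c' := min c 1
  have hc' : ∀ x, c' * μ x ^ 2 ≤ μ (x ^ 2) := fun x =>
    (mul_le_mul_of_nonneg_right (min_le_left c 1) (by positivity)).trans (hc x)
  refine ⟨c' ^ 2, by positivity, fun x => le_ciInf fun n => ?_⟩
  rw [one_div, Real.le_rpow_inv_iff_of_pos (by positivity) (apply_nonneg μ _) (by positivity),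
    Real.rpow_natCast]
  exact mul_pow_le_map_pow_of_sq (by positivity) (min_le_right c 1) hc' x n.pos

lemma exists_mul_pow_le_map_pow (hc0 : 0 < c) (hc : ∀ x, c * μ x ≤ smoothingFun μ x)
    {m : ℕ} (hm : 1 ≤ m) : ∃ c', 0 < c' ∧ ∀ x, c' * μ x ^ m ≤ μ (x ^ m) := by
  refine ⟨c ^ m, by positivity, fun x => ?_⟩
  calc c ^ m * μ x ^ m = (c * μ x) ^ m := (mul_pow c _ m).symm
    _ ≤ smoothingFun μ x ^ m := by gcongr; exact hc x
    _ = smoothingFun μ (x ^ m) := (isPowMul_smoothingFun μ x hm).symm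
    _ ≤ μ (x ^ m) := smoothingFun_le_self μ _

end RingSeminorm

namespace IsNARingNorm

variable {B : Type*} [CommRing B] {nm : B → ℝ} {c : ℝ}

lemma isNARingNorm_smoothingFun (h : IsNARingNorm nm) (hc0 : 0 < c)
    (hc : ∀ x, c * nm x ≤ smoothingFun h.toRingSeminorm x) :
    IsNARingNorm (smoothingFun h.toRingSeminorm) where
  nonneg := RingSeminorm.smoothingFun_nonneg _
  eq_zero_iff x := by
    refine ⟨fun hx => (h.eq_zero_iff x).1 (le_antisymm ?_ (h.nonneg x)), fun hx => ?_⟩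
    · have := hc x
      rw [hx] at this
      exact nonpos_of_mul_nonpos_right this hc0
    · refine le_antisymm ?_ (RingSeminorm.smoothingFun_nonneg _ x)
      exact (smoothingFun_le_self _ x).trans_eq ((h.eq_zero_iff x).2 hx)
  nonarch x y := by
    rw [sub_eq_add_neg, ← RingSeminorm.smoothingFun_neg _ y]
    exact RingSeminorm.isNonarchimedean_smoothingFun h.isNonarchimedean hc0 hc x (-y)
  submul := RingSeminorm.smoothingFun_mul_le hc0 hc

end IsNARingNorm

/-- Equivalence of the three characterizations of uniformity for a Banach ring:
(1) the norm is equivalent to a power-multiplicative norm;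
(2) for every `m > 1` there is `c > 0` with `|x^m| ≥ c |x|^m`;
(3) there is `c > 0` with `|x|_sp ≥ c |x|`, where `|x|_sp = lim_n |x^n|^{1/n} = inf_n |x^n|^{1/n}`. -/
theorem stmt4 {B : Type*} [CommRing B] (nm : B → ℝ) (hB : IsNABanach nm) :
    let c1 : Prop := ∃ nm' : B → ℝ, IsNARingNorm nm' ∧
      (∀ (x : B) (n : ℕ), 1 ≤ n → nm' (x ^ n) = nm' x ^ n) ∧
      ∃ c C : ℝ, 0 < c ∧ 0 < C ∧ ∀ x, c * nm' x ≤ nm x ∧ nm x ≤ C * nm' x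
    let c2 : Prop := ∀ m : ℕ, 1 < m → ∃ c : ℝ, 0 < c ∧ ∀ x, c * nm x ^ m ≤ nm (x ^ m)
    let c3 : Prop := ∃ c : ℝ, 0 < c ∧
      ∀ x, c * nm x ≤ ⨅ n : ℕ+, Real.rpow (nm (x ^ (n : ℕ))) ((n : ℝ)⁻¹)
    (c1 ↔ c2) ∧ (c2 ↔ c3) := by
  intro c1 c2 c3
  have hnm := hB.toIsNARingNorm
  set μ := hnm.toRingSeminorm
  have h3 : c3 ↔ ∃ c : ℝ, 0 < c ∧ ∀ x, c * μ x ≤ smoothingFun μ x := by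
    simp only [c3, smoothingFun, one_div]
    rfl
  have h12 : c1 → c2 := fun ⟨_, _, hpow, _, _, hc, hC, hequiv⟩ _ hm =>
    exists_mul_pow_le_of_isPowMul hB.nonneg (fun x _ hn => hpow x _ hn) hc hC hequiv hm.le
  have h23 : c2 → c3 := fun h2 =>
    h3.2 (RingSeminorm.exists_mul_le_smoothingFun_of_sq (h2 2 one_lt_two))
  have h32 : c3 → c2 := fun h m hm =>
    let ⟨_, hc0, hc⟩ := h3.1 h
    RingSeminorm.exists_mul_pow_le_map_pow hc0 hc hm.le
  have h31 : c3 → c1 := fun h =>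
    let ⟨c, hc0, hc⟩ := h3.1 h
    ⟨smoothingFun μ, hnm.isNARingNorm_smoothingFun hc0 hc,
      fun x _ hn => RingSeminorm.isPowMul_smoothingFun μ x hn, 1, c⁻¹, one_pos, inv_pos.2 hc0,
      fun x => ⟨(one_mul _).trans_le (smoothingFun_le_self μ x), (le_inv_mul_iff₀ hc0).2 (hc x)⟩⟩
  exact ⟨⟨h12, h31 ∘ h23⟩, h23, h32⟩
end

section
/- Let A be a Huber ring whose topology is induced by a finitely generated ideal I of an open subring A₀. Then the following are equivalent: (1) the set of topologically nilpotent elements of A generates the unit ideal of A; (2) every ideal of definition of any ring of definition generates the unit ideal of A; (3) every open ideal of A is the unit ideal. -/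
/-!
An open ideal `J` contains a power of every topologically nilpotent element, so its radical
contains the ideal they span; hence (1) forces `J = ⊤`. Conversely, an ideal of definition
consists of topologically nilpotent elements and is a neighbourhood of `0`, so the ideal it
spans in `A` is open, and (3) makes it the unit ideal.
-/

open Filter Topology

section

variable {A : Type*} [CommRing A] [TopologicalSpace A]

theorem Ideal.span_isTopologicallyNilpotent_le_radical {J : Ideal A} (hJ : IsOpen (J : Set A)) :
    Ideal.span {a : A | IsTopologicallyNilpotent a} ≤ J.radical :=
  Ideal.span_le.2 fun _ ha => ha.exists_pow_mem_of_mem_nhds (hJ.mem_nhds J.zero_mem)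

theorem Ideal.eq_top_of_isOpen_of_span_isTopologicallyNilpotent_eq_top
    (h : Ideal.span {a : A | IsTopologicallyNilpotent a} = ⊤) {J : Ideal A}
    (hJ : IsOpen (J : Set A)) : J = ⊤ :=
  Ideal.radical_eq_top.1 <| top_le_iff.1 <| h ▸ Ideal.span_isTopologicallyNilpotent_le_radical hJ

theorem Ideal.isOpen_span_of_mem_nhds_zero [IsTopologicalRing A] {S : Set A} (hS : S ∈ 𝓝 0) :
    IsOpen (Ideal.span S : Set A) :=
  (Ideal.span S).toAddSubgroup.isOpen_of_mem_nhds (mem_of_superset hS Ideal.subset_span)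

theorem Ideal.val_image_subset_setOf_isTopologicallyNilpotent {B : Subring A} {J : Ideal B}
    (hJ : ∀ U ∈ 𝓝 (0 : A), ∃ n : ℕ, Subtype.val '' ((J ^ n : Ideal B) : Set B) ⊆ U) :
    Subtype.val '' (J : Set B) ⊆ {a : A | IsTopologicallyNilpotent a} := by
  rintro _ ⟨x, hx, rfl⟩ U hU
  obtain ⟨n, hn⟩ := hJ U hU
  exact mem_map.2 <| mem_of_superset (Ici_mem_atTop n) fun m hm =>
    hn ⟨x ^ m, Ideal.pow_le_pow_right hm (Ideal.pow_mem_pow hx m), rfl⟩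

end

/-- For a Huber ring `A` (topology induced by a finitely generated ideal `I` of an open
subring `A₀`), the following are equivalent: (1) topologically nilpotent elements generate
the unit ideal; (2) every ideal of definition of any ring of definition generates the unit
ideal of `A`; (3) every open ideal of `A` is the unit ideal. -/
theorem stmt5 {A : Type*} [CommRing A] [TopologicalSpace A] [IsTopologicalRing A]
    (A0 : Subring A) (hA0 : IsOpen (A0 : Set A)) (I : Ideal A0) (hIfg : I.FG)
    (hadic : (∀ n : ℕ, Subtype.val '' ((I ^ n : Ideal A0) : Set A0) ∈ nhds (0 : A)) ∧
      ∀ U ∈ nhds (0 : A), ∃ n : ℕ, Subtype.val '' ((I ^ n : Ideal A0) : Set A0) ⊆ U) :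
    let c1 : Prop :=
      Ideal.span {a : A | Tendsto (fun n : ℕ => a ^ n) atTop (nhds 0)} = ⊤
    let c2 : Prop := ∀ B : Subring A, IsOpen (B : Set A) → ∀ J : Ideal B, J.FG →
      ((∀ n : ℕ, Subtype.val '' ((J ^ n : Ideal B) : Set B) ∈ nhds (0 : A)) ∧
        ∀ U ∈ nhds (0 : A), ∃ n : ℕ, Subtype.val '' ((J ^ n : Ideal B) : Set B) ⊆ U) →
      Ideal.span (Subtype.val '' (J : Set B)) = ⊤
    let c3 : Prop := ∀ J : Ideal A, IsOpen (J : Set A) → J = ⊤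
    (c1 ↔ c3) ∧ (c2 ↔ c3) := by
  intro c1 c2 c3
  have hI : Subtype.val '' (I : Set A0) ∈ 𝓝 (0 : A) := by simpa using hadic.1 1
  have hI_nil := Ideal.val_image_subset_setOf_isTopologicallyNilpotent hadic.2
  have h13 : c1 → c3 := fun h1 _ hJ =>
    Ideal.eq_top_of_isOpen_of_span_isTopologicallyNilpotent_eq_top h1 hJ
  refine ⟨⟨h13, fun h3 => h3 _ (Ideal.isOpen_span_of_mem_nhds_zero (mem_of_superset hI hI_nil))⟩,
    ⟨fun h2 => h13 ?_, fun h3 _ _ J _ hJ => h3 _ (Ideal.isOpen_span_of_mem_nhds_zero ?_)⟩⟩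
  · exact top_le_iff.1 <| (h2 A0 hA0 I hIfg hadic).ge.trans (Ideal.span_mono hI_nil)
  · simpa using hJ.1 1
end

section
/- Let A be a uniform nonarchimedean Banach ring (the norm is equivalent to a power-multiplicative norm). Choose x = ∑_{n≥0} x_n T^n in the Tate algebra A⟨T⟩ such that the coefficients x_n generate the unit ideal of A. Then multiplication by x is a strict injection A⟨T⟩ → A⟨T⟩; in particular the principal ideal (x) is closed in A⟨T⟩. -/
/-!
Let `ν` be the power-multiplicative norm equivalent to the given one and write `1 = ∑ cᵢ xᵢ`.
Every multiplicative nonarchimedean seminorm `p ≤ ν` (a point of the Gelfand spectrum) has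
`p (xᵢ) ≥ δ` for some `i`, with `δ` depending only on the `cᵢ`; since the Gauss extension of `p`
is multiplicative, some coefficient of `x * y` has `p`-value at least `δ * p (yₙ)`.
It remains that each value `ν z` is attained by such a `p` (Berkovich). By Zorn's lemma take a
minimal power-multiplicative seminorm `m ≤ ν` with `m z = ν z`. Any `c` with `m c ≠ 0` is
multiplicative for `m`: the seminorm `x ↦ lim m (x cⁿ) / m (c)ⁿ` (`seminormFromConst`) lies below
`m` and still takes the value `m z` at `z` (first for `c = z`, then for every `c`), so it is `m`.
-/

open Filter

open Topology

section SubLeMax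

variable {R : Type*} [CommRing R] {f : R → ℝ}

lemma nonneg_of_sub_le_max (map_zero : f 0 = 0)
    (sub_le_max : ∀ x y, f (x - y) ≤ max (f x) (f y)) (x : R) : 0 ≤ f x := by
  simpa [map_zero] using sub_le_max x x

lemma map_neg_of_sub_le_max (map_zero : f 0 = 0)
    (sub_le_max : ∀ x y, f (x - y) ≤ max (f x) (f y)) (x : R) : f (-x) = f x := by
  have hx := nonneg_of_sub_le_max map_zero sub_le_max x
  have hnx := nonneg_of_sub_le_max map_zero sub_le_max (-x)
  apply le_antisymm
  · simpa [map_zero, hx] using sub_le_max 0 x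
  · simpa [map_zero, hnx] using sub_le_max 0 (-x)

lemma isNonarchimedean_of_sub_le_max (map_zero : f 0 = 0)
    (sub_le_max : ∀ x y, f (x - y) ≤ max (f x) (f y)) : IsNonarchimedean f := fun x y => by
  simpa [map_neg_of_sub_le_max map_zero sub_le_max] using sub_le_max x (-y)

end SubLeMax

def RingSeminorm.ofSubLeMax {R : Type*} [CommRing R] (f : R → ℝ) (map_zero : f 0 = 0)
    (sub_le_max : ∀ x y, f (x - y) ≤ max (f x) (f y)) (mul_le : ∀ x y, f (x * y) ≤ f x * f y) :
    RingSeminorm R where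
  toFun := f
  map_zero' := map_zero
  add_le' x y := (isNonarchimedean_of_sub_le_max map_zero sub_le_max x y).trans <|
    max_le_add_of_nonneg (nonneg_of_sub_le_max map_zero sub_le_max x)
      (nonneg_of_sub_le_max map_zero sub_le_max y)
  neg' := map_neg_of_sub_le_max map_zero sub_le_max
  mul_le' := mul_le

@[simp]
lemma RingSeminorm.coe_ofSubLeMax {R : Type*} [CommRing R] (f : R → ℝ) (map_zero : f 0 = 0)
    (sub_le_max : ∀ x y, f (x - y) ≤ max (f x) (f y)) (mul_le : ∀ x y, f (x * y) ≤ f x * f y) :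
    ⇑(RingSeminorm.ofSubLeMax f map_zero sub_le_max mul_le) = f :=
  rfl

lemma le_of_forall_pos_le_of_continuousAt {a : ℝ} {g : ℝ → ℝ} (hg : ContinuousAt g 0)
    (h : ∀ ε > 0, a ≤ g ε) : a ≤ g 0 :=
  ge_of_tendsto (hg.tendsto.mono_left nhdsWithin_le_nhds)
    (eventually_nhdsWithin_of_forall (s := Set.Ioi 0) h)

namespace RingSeminorm

variable {R : Type*} [CommRing R] (f : RingSeminorm R) (z : R)

structure IsPowMulMinorant (p : RingSeminorm R) : Prop where
  isPowMul : IsPowMul p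
  isNonarchimedean : IsNonarchimedean p
  le : ∀ x, p x ≤ f x
  apply_eq : p z = f z

variable {f z}

lemma isPowMulMinorant_self (hpm : IsPowMul f) (hna : IsNonarchimedean f) :
    IsPowMulMinorant f z f :=
  ⟨hpm, hna, fun _ => le_rfl, rfl⟩

lemma IsPowMulMinorant.sub_le_max {p : RingSeminorm R} (hp : IsPowMulMinorant f z p) (x y : R) :
    p (x - y) ≤ max (p x) (p y) := by
  simpa [sub_eq_add_neg] using hp.isNonarchimedean x (-y)

lemma IsPowMulMinorant.seminormFromConst {p : RingSeminorm R} (hp : IsPowMulMinorant f z p)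
    {c : R} (hc : p c ≠ 0) (hcz : seminormFromConst' c p z = p z) :
    IsPowMulMinorant f z (seminormFromConst hp.isPowMul.map_one_le_one hc hp.isPowMul) where
  isPowMul := seminormFromConst_isPowMul hp.isPowMul.map_one_le_one hc hp.isPowMul
  isNonarchimedean := seminormFromConst_isNonarchimedean hp.isPowMul.map_one_le_one hc hp.isPowMul
    hp.isNonarchimedean
  le x :=
    (seminormFromConst_le_seminorm hp.isPowMul.map_one_le_one hc hp.isPowMul x).trans (hp.le x)
  apply_eq := hcz.trans hp.apply_eq

lemma exists_isPowMulMinorant_le_of_isChain {c : Set (RingSeminorm R)}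
    (hc : IsChain (fun p q : RingSeminorm R => ∀ x, q x ≤ p x) c) (hne : c.Nonempty)
    (hcm : ∀ p ∈ c, IsPowMulMinorant f z p) :
    ∃ m, IsPowMulMinorant f z m ∧ ∀ p ∈ c, ∀ x, m x ≤ p x := by
  have : Nonempty c := hne.to_subtype
  set m : R → ℝ := fun x => ⨅ p : c, p.1 x
  have hbdd (x : R) : BddBelow (Set.range fun p : c => p.1 x) :=
    ⟨0, by rintro _ ⟨p, rfl⟩; exact apply_nonneg _ _⟩
  have hm_le (p : c) (x : R) : m x ≤ p.1 x := ciInf_le (hbdd x) p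
  -- Being a chain, `c` contains a single seminorm close to the infimum at two given points.
  have hclose (x y : R) (ε : ℝ) (hε : 0 < ε) :
      ∃ p ∈ c, p x ≤ m x + ε ∧ p y ≤ m y + ε := by
    obtain ⟨p, hp⟩ := exists_lt_of_ciInf_lt (lt_add_of_pos_right (m x) hε)
    obtain ⟨q, hq⟩ := exists_lt_of_ciInf_lt (lt_add_of_pos_right (m y) hε)
    rcases eq_or_ne p.1 q.1 with hpq | hpq
    · exact ⟨p, p.2, hp.le, hpq ▸ hq.le⟩
    rcases hc p.2 q.2 hpq with hpq | hqp
    · exact ⟨q, q.2, (hpq x).trans hp.le, hq.le⟩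
    · exact ⟨p, p.2, hp.le, (hqp y).trans hq.le⟩
  have hm_zero : m 0 = 0 := by
    obtain ⟨p, hp⟩ := hne
    exact le_antisymm ((hm_le ⟨p, hp⟩ 0).trans (map_zero p).le)
      (le_ciInf fun _ => apply_nonneg _ _)
  have hm_sub (x y : R) : m (x - y) ≤ max (m x) (m y) := by
    refine le_of_forall_pos_le_add fun ε hε => ?_
    obtain ⟨p, hpc, hpx, hpy⟩ := hclose x y ε hε
    calc m (x - y) ≤ p (x - y) := hm_le ⟨p, hpc⟩ _
      _ ≤ max (p x) (p y) := (hcm p hpc).sub_le_max x y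
      _ ≤ max (m x) (m y) + ε := by rw [← max_add_add_right]; exact max_le_max hpx hpy
  have hm_mul (x y : R) : m (x * y) ≤ m x * m y := by
    suffices m (x * y) ≤ (m x + 0) * (m y + 0) by simpa only [add_zero] using this
    refine le_of_forall_pos_le_of_continuousAt (g := fun ε => (m x + ε) * (m y + ε))
      (by fun_prop) fun ε hε => ?_
    obtain ⟨p, hpc, hpx, hpy⟩ := hclose x y ε hε
    calc m (x * y) ≤ p (x * y) := hm_le ⟨p, hpc⟩ _
      _ ≤ p x * p y := map_mul_le_mul p x y
      _ ≤ (m x + ε) * (m y + ε) :=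
        mul_le_mul hpx hpy (apply_nonneg _ _) ((apply_nonneg p x).trans hpx)
  refine ⟨ofSubLeMax m hm_zero hm_sub hm_mul, ⟨fun x n hn => ?_, ?_, fun x => ?_, ?_⟩,
    fun p hp x => hm_le ⟨p, hp⟩ x⟩
  · simp only [coe_ofSubLeMax]
    refine le_antisymm ?_ (le_ciInf fun p => ?_)
    · suffices m (x ^ n) ≤ (m x + 0) ^ n by simpa only [add_zero] using this
      refine le_of_forall_pos_le_of_continuousAt (g := fun ε => (m x + ε) ^ n)
        (by fun_prop) fun ε hε => ?_
      obtain ⟨p, hpc, hpx, -⟩ := hclose x x ε hε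
      calc m (x ^ n) ≤ p (x ^ n) := hm_le ⟨p, hpc⟩ _
        _ = p x ^ n := (hcm p hpc).isPowMul x hn
        _ ≤ (m x + ε) ^ n := by gcongr
    · rw [(hcm p.1 p.2).isPowMul x hn]
      exact pow_le_pow_left₀ (le_ciInf fun _ => apply_nonneg _ _) (hm_le p x) n
  · exact isNonarchimedean_of_sub_le_max hm_zero hm_sub
  · obtain ⟨p, hp⟩ := hne
    exact (hm_le ⟨p, hp⟩ x).trans ((hcm p hp).le x)
  · obtain ⟨p, hp⟩ := hne
    exact le_antisymm ((hm_le ⟨p, hp⟩ z).trans (hcm p hp).apply_eq.le)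
      (le_ciInf fun q => (hcm q.1 q.2).apply_eq.ge)

lemma exists_minimal_isPowMulMinorant (hpm : IsPowMul f) (hna : IsNonarchimedean f) :
    ∃ m, IsPowMulMinorant f z m ∧
      ∀ p, IsPowMulMinorant f z p → (∀ x, p x ≤ m x) → ∀ x, m x ≤ p x := by
  let r (p q : {p // IsPowMulMinorant f z p}) : Prop := ∀ x, q.1 x ≤ p.1 x
  have : Nonempty {p // IsPowMulMinorant f z p} := ⟨⟨f, isPowMulMinorant_self hpm hna⟩⟩
  have hchain (c : Set {p // IsPowMulMinorant f z p}) (hc : IsChain r c) (hne : c.Nonempty) :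
      ∃ lb, ∀ p ∈ c, r p lb := by
    obtain ⟨lb, hlb, hle⟩ := exists_isPowMulMinorant_le_of_isChain (c := Subtype.val '' c)
      (by
        rintro _ ⟨p, hp, rfl⟩ _ ⟨q, hq, rfl⟩ hpq
        exact hc hp hq (fun h => hpq (congrArg Subtype.val h)))
      (hne.image _) (by rintro _ ⟨p, -, rfl⟩; exact p.2)
    exact ⟨⟨lb, hlb⟩, fun p hp => hle p.1 ⟨p, hp, rfl⟩⟩
  obtain ⟨m, hm⟩ := exists_maximal_of_nonempty_chains_bounded hchain
    fun hpq hqr x => (hqr x).trans (hpq x)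
  exact ⟨m.1, m.2, fun p hp hpm => hm ⟨p, hp⟩ hpm⟩

lemma IsPowMulMinorant.map_mul_of_minimal {m : RingSeminorm R} (hm : IsPowMulMinorant f z m)
    (hmin : ∀ p, IsPowMulMinorant f z p → (∀ x, p x ≤ m x) → ∀ x, m x ≤ p x)
    {c : R} (hc : m c ≠ 0) (hcz : seminormFromConst' c m z = m z) (y : R) :
    m (c * y) = m c * m y := by
  have hm1 := hm.isPowMul.map_one_le_one
  have heq (x : R) : seminormFromConst' c m x = m x :=
    le_antisymm (seminormFromConst_le_seminorm hm1 hc hm.isPowMul x)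
      (hmin _ (hm.seminormFromConst hc hcz) (seminormFromConst_le_seminorm hm1 hc hm.isPowMul) x)
  simpa only [heq] using seminormFromConst_const_mul hm1 hc hm.isPowMul y

theorem exists_mulRingSeminorm_le_eq (hpm : IsPowMul f) (hna : IsNonarchimedean f)
    (hz : f z ≠ 0) :
    ∃ p : MulRingSeminorm R, IsNonarchimedean p ∧ (∀ x, p x ≤ f x) ∧ p z = f z := by
  obtain ⟨m, hm, hmin⟩ := exists_minimal_isPowMulMinorant (z := z) hpm hna
  have hmz : m z ≠ 0 := hm.apply_eq ▸ hz
  have hm1 := hm.isPowMul.map_one_le_one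
  have hzmul := hm.map_mul_of_minimal hmin hmz (seminormFromConst_apply_c hm1 hmz hm.isPowMul)
  have hmul (c y : R) : m (c * y) = m c * m y := by
    by_cases hc : m c = 0
    · rw [hc, zero_mul]
      exact le_antisymm ((map_mul_le_mul m c y).trans_eq (by rw [hc, zero_mul]))
        (apply_nonneg _ _)
    · exact hm.map_mul_of_minimal hmin hc
        (seminormFromConst_apply_of_isMul hm1 hc hm.isPowMul hzmul) y
  have hone : m 1 = 1 := by
    have := hmul 1 z
    rw [one_mul] at this
    exact (mul_eq_right₀ hmz).mp this.symm
  exact ⟨{ m with map_one' := hone, map_mul' := hmul }, hm.isNonarchimedean, hm.le, hm.apply_eq⟩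

end RingSeminorm

lemma exists_first_max_of_tendsto_zero {s : ℕ → ℝ} (hs0 : ∀ n, 0 ≤ s n)
    (hs : Tendsto s atTop (𝓝 0)) : ∃ i₀, (∀ j, s j ≤ s i₀) ∧ ∀ i < i₀, s i < s i₀ := by
  classical
  have hmax : ∃ i, ∀ j, s j ≤ s i := by
    by_cases hzero : ∀ i, s i = 0
    · exact ⟨0, fun j => by simp [hzero]⟩
    obtain ⟨i, hi⟩ := not_forall.mp hzero
    obtain ⟨N, hN⟩ := eventually_atTop.mp (hs.eventually (gt_mem_nhds ((hs0 i).lt_of_ne' hi)))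
    obtain ⟨k, -, hk⟩ := (Finset.range (N + i + 1)).exists_max_image s ⟨i, by simp⟩
    refine ⟨k, fun j => ?_⟩
    rcases lt_or_ge j (N + i + 1) with hj | hj
    · exact hk j (Finset.mem_range.mpr hj)
    · exact (hN j (by omega)).le.trans (hk i (by simp))
  refine ⟨Nat.find hmax, Nat.find_spec hmax, fun i hi => ?_⟩
  obtain ⟨j, hj⟩ := not_forall.mp (Nat.find_min hmax hi)
  exact (not_le.mp hj).trans_le (Nat.find_spec hmax j)

section CauchyProduct

variable {R : Type*} [CommRing R]

def cauchyProduct (a b : ℕ → R) (n : ℕ) : R :=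
  ∑ i ∈ Finset.range (n + 1), a i * b (n - i)

lemma bddAbove_apply_cauchyProduct (p : RingSeminorm R) (hna : IsNonarchimedean p) {a b : ℕ → R}
    (ha : BddAbove (Set.range fun n => p (a n))) (hb : BddAbove (Set.range fun n => p (b n))) :
    BddAbove (Set.range fun n => p (cauchyProduct a b n)) := by
  obtain ⟨A, hA⟩ := ha
  obtain ⟨B, hB⟩ := hb
  refine ⟨A * B, ?_⟩
  rintro _ ⟨n, rfl⟩
  obtain ⟨i, -, hi⟩ := hna.finset_image_add (map_zero p) (apply_nonneg p)
    (fun i => a i * b (n - i)) (Finset.range (n + 1))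
  exact hi.trans <| (map_mul_le_mul p _ _).trans <| mul_le_mul (hA ⟨i, rfl⟩) (hB ⟨n - i, rfl⟩)
    (apply_nonneg _ _) ((apply_nonneg _ _).trans (hA ⟨i, rfl⟩))

/-- Gauss's lemma. If `i₀`, `j₀` are the first indices where `p ∘ a` and `p ∘ b` are maximal,
the `(i₀, j₀)` term strictly dominates the other terms of the `(i₀ + j₀)`-th coefficient. -/
lemma MulRingSeminorm.exists_mul_le_apply_cauchyProduct (p : MulRingSeminorm R)
    (hna : IsNonarchimedean p) {a b : ℕ → R} (ha : Tendsto (fun n => p (a n)) atTop (𝓝 0))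
    (hb : Tendsto (fun n => p (b n)) atTop (𝓝 0)) :
    ∃ k, ∀ i j, p (a i) * p (b j) ≤ p (cauchyProduct a b k) := by
  obtain ⟨i₀, hi₀, hlt_i₀⟩ := exists_first_max_of_tendsto_zero (fun n => apply_nonneg p (a n)) ha
  obtain ⟨j₀, hj₀, hlt_j₀⟩ := exists_first_max_of_tendsto_zero (fun n => apply_nonneg p (b n)) hb
  refine ⟨i₀ + j₀, fun i j => ?_⟩
  refine (mul_le_mul (hi₀ i) (hj₀ j) (apply_nonneg _ _) (apply_nonneg _ _)).trans ?_
  rcases (mul_nonneg (apply_nonneg p (a i₀)) (apply_nonneg p (b j₀))).eq_or_lt with h0 | hpos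
  · exact h0 ▸ apply_nonneg _ _
  have hA : 0 < p (a i₀) := pos_of_mul_pos_left hpos (apply_nonneg _ _)
  have hB : 0 < p (b j₀) := pos_of_mul_pos_right hpos (apply_nonneg _ _)
  have hdom : ∀ i ∈ Finset.range (i₀ + j₀ + 1), i ≠ i₀ →
      p (a i * b (i₀ + j₀ - i)) < p (a i₀ * b (i₀ + j₀ - i₀)) := by
    intro i hi hne
    rw [map_mul, map_mul, Nat.add_sub_cancel_left]
    rcases hne.lt_or_gt with hlt | hgt
    · exact (mul_le_mul_of_nonneg_left (hj₀ _) (apply_nonneg _ _)).trans_lt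
        (mul_lt_mul_of_pos_right (hlt_i₀ i hlt) hB)
    · have : i₀ + j₀ - i < j₀ := by have := Finset.mem_range.mp hi; omega
      exact (mul_le_mul_of_nonneg_right (hi₀ i) (apply_nonneg _ _)).trans_lt
        (mul_lt_mul_of_pos_left (hlt_j₀ _ this) hA)
  rw [cauchyProduct, hna.apply_sum_eq_of_lt (fun x => (map_neg_eq_map p x).symm)
    (Finset.mem_range.mpr (by omega)) hdom, map_mul, Nat.add_sub_cancel_left]

end CauchyProduct

lemma exists_pos_le_apply_of_span_eq_top {R ι : Type*} [CommRing R] {x : ι → R}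
    (hx : Ideal.span (Set.range x) = ⊤) (ν : RingSeminorm R) :
    ∃ δ > 0, ∀ p : MulRingSeminorm R, IsNonarchimedean p → (∀ a, p a ≤ ν a) →
      ∃ i, δ ≤ p (x i) := by
  obtain ⟨co, hco⟩ := Finsupp.mem_span_range_iff_exists_finsupp.mp
    (hx ▸ Submodule.mem_top : (1 : R) ∈ Ideal.span (Set.range x))
  set D := 1 + ∑ i ∈ co.support, ν (co i)
  have hD : 0 < D := by positivity
  refine ⟨D⁻¹, inv_pos.mpr hD, fun p hna hle => ?_⟩
  have hsum : ∑ i ∈ co.support, co i * x i = 1 := hco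
  have hne : co.support.Nonempty := by
    by_contra h
    rw [Finset.not_nonempty_iff_eq_empty.mp h, Finset.sum_empty] at hsum
    simpa [← hsum] using map_one p
  obtain ⟨i, hi, hpi⟩ := hna.finset_image_add_of_nonempty (fun i => co i * x i) hne
  refine ⟨i, (inv_le_iff_one_le_mul₀ hD).mpr ?_⟩
  calc (1 : ℝ) = p (∑ i ∈ co.support, co i * x i) := by rw [hsum, map_one]
    _ ≤ p (co i) * p (x i) := hpi.trans_eq (map_mul p _ _)
    _ ≤ p (x i) * D := by
        rw [mul_comm]
        gcongr
        exact (hle _).trans <| (Finset.single_le_sum (fun j _ => apply_nonneg ν (co j)) hi).trans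
          (le_add_of_nonneg_left zero_le_one)

lemma RingSeminorm.exists_pos_mul_le_apply_cauchyProduct {R : Type*} [CommRing R]
    (ν : RingSeminorm R) (hpm : IsPowMul ν) (hna : IsNonarchimedean ν) {x : ℕ → R}
    (hx : Ideal.span (Set.range x) = ⊤) :
    ∃ δ > 0, ∀ y : ℕ → R, Tendsto (fun n => ν (x n)) atTop (𝓝 0) →
      Tendsto (fun n => ν (y n)) atTop (𝓝 0) →
        ∀ n, ∃ k, δ * ν (y n) ≤ ν (cauchyProduct x y k) := by
  obtain ⟨δ, hδ, hδx⟩ := exists_pos_le_apply_of_span_eq_top hx ν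
  refine ⟨δ, hδ, fun y hxν hyν n => ?_⟩
  by_cases hyn : ν (y n) = 0
  · exact ⟨0, by rw [hyn, mul_zero]; exact apply_nonneg _ _⟩
  obtain ⟨p, hpna, hple, hpy⟩ := ν.exists_mulRingSeminorm_le_eq hpm hna hyn
  have hnull {a : ℕ → R} (ha : Tendsto (fun n => ν (a n)) atTop (𝓝 0)) :
      Tendsto (fun n => p (a n)) atTop (𝓝 0) :=
    squeeze_zero (fun _ => apply_nonneg _ _) (fun _ => hple _) ha
  obtain ⟨k, hk⟩ := p.exists_mul_le_apply_cauchyProduct hpna (hnull hxν) (hnull hyν)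
  obtain ⟨i, hi⟩ := hδx p hpna hple
  refine ⟨k, ?_⟩
  calc δ * ν (y n) ≤ p (x i) * p (y n) := by rw [hpy]; gcongr
    _ ≤ p (cauchyProduct x y k) := hk i n
    _ ≤ ν (cauchyProduct x y k) := hple _

lemma RingSeminorm.exists_pos_mul_le_iSup_cauchyProduct {R : Type*} [CommRing R]
    (μ ν : RingSeminorm R) (hμ : IsNonarchimedean μ) (hpm : IsPowMul ν) (hν : IsNonarchimedean ν)
    {c C : ℝ} (hc : 0 < c) (hC : 0 < C) (hμν : ∀ a, c * ν a ≤ μ a ∧ μ a ≤ C * ν a)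
    {x : ℕ → R} (hx : Ideal.span (Set.range x) = ⊤)
    (hxnull : Tendsto (fun n => μ (x n)) atTop (𝓝 0)) :
    ∃ ε > 0, ∀ y : ℕ → R, Tendsto (fun n => μ (y n)) atTop (𝓝 0) →
      ∀ n, ε * μ (y n) ≤ ⨆ k, μ (cauchyProduct x y k) := by
  obtain ⟨δ, hδ, hδν⟩ := ν.exists_pos_mul_le_apply_cauchyProduct hpm hν hx
  have hνnull {a : ℕ → R} (ha : Tendsto (fun n => μ (a n)) atTop (𝓝 0)) :
      Tendsto (fun n => ν (a n)) atTop (𝓝 0) :=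
    squeeze_zero (fun _ => apply_nonneg _ _) (fun n => (le_div_iff₀' hc).mpr (hμν (a n)).1)
      (by simpa using ha.div_const c)
  refine ⟨δ * c / C, by positivity, fun y hy n => ?_⟩
  obtain ⟨k, hk⟩ := hδν y (hνnull hxnull) (hνnull hy) n
  have hbdd := bddAbove_apply_cauchyProduct μ hμ hxnull.bddAbove_range hy.bddAbove_range
  calc δ * c / C * μ (y n) ≤ δ * c / C * (C * ν (y n)) := by gcongr; exact (hμν _).2
    _ = c * (δ * ν (y n)) := by field_simp
    _ ≤ c * ν (cauchyProduct x y k) := by gcongr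
    _ ≤ μ (cauchyProduct x y k) := (hμν _).1
    _ ≤ ⨆ k, μ (cauchyProduct x y k) := le_ciSup hbdd k

/-- Elements of the Tate algebra `A⟨T⟩` are null sequences of coefficients, with the
Gauss norm `sup_n |a_n|`; multiplication is the Cauchy convolution product. -/
theorem stmt7 {A : Type*} [CommRing A] (nm : A → ℝ) (hB : IsNABanach nm)
    (huniform : ∃ nm' : A → ℝ,
      (∀ x, 0 ≤ nm' x) ∧ (∀ x y, nm' (x - y) ≤ max (nm' x) (nm' y)) ∧
      (∀ x y, nm' (x * y) ≤ nm' x * nm' y) ∧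
      (∀ (x : A) (n : ℕ), 1 ≤ n → nm' (x ^ n) = nm' x ^ n) ∧
      ∃ c C : ℝ, 0 < c ∧ 0 < C ∧ ∀ x, c * nm' x ≤ nm x ∧ nm x ≤ C * nm' x)
    (x : ℕ → A)
    (hxnull : Tendsto (fun n => nm (x n)) atTop (nhds 0))
    (hxspan : Ideal.span (Set.range x) = ⊤) :
    let conv : (ℕ → A) → (ℕ → A) → (ℕ → A) := fun a b n =>
      ∑ i ∈ Finset.range (n + 1), a i * b (n - i)
    let G : (ℕ → A) → ℝ := fun a => ⨆ n, nm (a n)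
    (∃ c : ℝ, 0 < c ∧ ∀ y : ℕ → A, Tendsto (fun n => nm (y n)) atTop (nhds 0) →
      c * G y ≤ G (conv x y)) ∧
    ∀ y : ℕ → A, Tendsto (fun n => nm (y n)) atTop (nhds 0) →
      conv x y = 0 → y = 0 := by
  intro conv G
  obtain ⟨ν, hν0, hνsub, hνmul, hνpow, c, C, hc, hC, hνnm⟩ := huniform
  have hnm0 : nm 0 = 0 := (hB.eq_zero_iff 0).mpr rfl
  have hν_zero : ν 0 = 0 := by nlinarith [(hνnm 0).1, hν0 0]
  obtain ⟨ε, hε, hbound⟩ :=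
    (RingSeminorm.ofSubLeMax nm hnm0 hB.nonarch hB.submul).exists_pos_mul_le_iSup_cauchyProduct
      (RingSeminorm.ofSubLeMax ν hν_zero hνsub hνmul)
      (isNonarchimedean_of_sub_le_max hnm0 hB.nonarch) (fun a n hn => hνpow a n hn)
      (isNonarchimedean_of_sub_le_max hν_zero hνsub) hc hC hνnm hxspan hxnull
  refine ⟨⟨ε, hε, fun y hy => ?_⟩, fun y hy hxy => ?_⟩
  · rw [Real.mul_iSup_of_nonneg hε.le]
    exact ciSup_le (hbound y hy)
  · funext n
    have h : ε * nm (y n) ≤ ⨆ k, nm (conv x y k) := hbound y hy n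
    simp only [hxy, Pi.zero_apply, hnm0, ciSup_const] at h
    exact (hB.eq_zero_iff _).mp (le_antisymm (nonpos_of_mul_nonpos_right h hε) (hB.nonneg _))
end

section
/- Let S be a commutative ring equipped with a power-multiplicative nonarchimedean norm, and let S⟨T^{1/p^∞}⟩_ρ be the completion of S[T^{1/p^∞}] (polynomials in p-power roots of T) under the weighted Gauss norm |∑_i a_i T^i| = max_i |a_i| ρ^i for a fixed ρ ∈ (0,1). Then the weighted Gauss norm on S⟨T^{1/p^∞}⟩_ρ is power-multiplicative; if moreover the norm on S is multiplicative, so is the weighted Gauss norm. -/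
/-!
Write `c_f` for the Gauss norm of `f` and `q` for the smallest exponent at which it is attained.
The coefficient of `f * g` at `q + r` differs from `f_q g_r` by a sum of products `f_a g_b` with
`a < q` or `b < r`, each of weighted size `< c_f c_g`; by the ultrametric inequality the
coefficient itself then has weighted size `|f_q g_r| ρ^(q + r)`, which is `c_f c_g` when the
norm is multiplicative. Iterating with `g = f`, the coefficient of `f ^ n` at `n q` is `f_q ^ n`
up to an error of weighted size `< c_f ^ n`, and `|f_q ^ n| ρ^(n q) = c_f ^ n` already under
power-multiplicativity. The reverse inequalities are submultiplicativity of the Gauss norm.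
-/

open Finset

section Ultrametric

variable {S : Type*} [Ring S] {v : S → ℝ}

theorem apply_neg_of_apply_sub_le_max (h0 : v 0 = 0) (hnonneg : ∀ x, 0 ≤ v x)
    (hsub : ∀ x y, v (x - y) ≤ max (v x) (v y)) (x : S) : v (-x) = v x := by
  have hle : ∀ y, v (-y) ≤ v y := fun y => by
    simpa [h0, hnonneg y] using hsub 0 y
  exact le_antisymm (hle x) (by simpa using hle (-x))

theorem isNonarchimedean_of_apply_sub_le_max (h0 : v 0 = 0) (hnonneg : ∀ x, 0 ≤ v x)
    (hsub : ∀ x y, v (x - y) ≤ max (v x) (v y)) : IsNonarchimedean v := fun x y => by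
  simpa [apply_neg_of_apply_sub_le_max h0 hnonneg hsub] using hsub x (-y)

def RingSeminorm.ofApplySubLeMax (v : S → ℝ) (h0 : v 0 = 0) (hnonneg : ∀ x, 0 ≤ v x)
    (hsub : ∀ x y, v (x - y) ≤ max (v x) (v y)) (hmul : ∀ x y, v (x * y) ≤ v x * v y) :
    RingSeminorm S where
  toFun := v
  map_zero' := h0
  add_le' x y := (isNonarchimedean_of_apply_sub_le_max h0 hnonneg hsub x y).trans
    (max_le_add_of_nonneg (hnonneg x) (hnonneg y))
  neg' := apply_neg_of_apply_sub_le_max h0 hnonneg hsub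
  mul_le' := hmul

end Ultrametric

section NonarchimedeanSum

variable {α ι : Type*} [AddCommMonoid α] {v : α → ℝ}

theorem IsNonarchimedean.apply_sum_mul_le (hv : IsNonarchimedean v) (hv0 : v 0 = 0)
    (s : Finset ι) (y : ι → α) {t c : ℝ} (ht : 0 ≤ t) (hc : 0 ≤ c)
    (h : ∀ i ∈ s, v (y i) * t ≤ c) : v (∑ i ∈ s, y i) * t ≤ c := by
  rcases s.eq_empty_or_nonempty with rfl | hs
  · simpa [hv0] using hc
  obtain ⟨i, hi, hle⟩ := hv.finset_image_add_of_nonempty y hs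
  exact (mul_le_mul_of_nonneg_right hle ht).trans (h i hi)

theorem IsNonarchimedean.apply_sum_mul_lt (hv : IsNonarchimedean v) (hv0 : v 0 = 0)
    (s : Finset ι) (y : ι → α) {t c : ℝ} (ht : 0 ≤ t) (hc : 0 < c)
    (h : ∀ i ∈ s, v (y i) * t < c) : v (∑ i ∈ s, y i) * t < c := by
  rcases s.eq_empty_or_nonempty with rfl | hs
  · simpa [hv0] using hc
  obtain ⟨i, hi, hle⟩ := hv.finset_image_add_of_nonempty y hs
  exact (mul_le_mul_of_nonneg_right hle ht).trans_lt (h i hi)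

theorem IsNonarchimedean.apply_add_mul_lt (hv : IsNonarchimedean v) {x y : α} {t c : ℝ}
    (ht : 0 ≤ t) (hx : v x * t < c) (hy : v y * t < c) : v (x + y) * t < c :=
  (mul_le_mul_of_nonneg_right (hv x y) ht).trans_lt
    (by rw [max_mul_of_nonneg _ _ ht]; exact max_lt hx hy)

end NonarchimedeanSum

theorem lt_or_lt_of_add_eq_add_of_ne {M : Type*} [AddCommMonoid M] [LinearOrder M]
    [IsOrderedCancelAddMonoid M] {a b c d : M} (h : a + b = c + d) (hne : (a, b) ≠ (c, d)) :
    a < c ∨ b < d := by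
  rcases lt_trichotomy a c with hac | rfl | hca
  · exact Or.inl hac
  · exact (hne (by rw [add_left_cancel h])).elim
  · exact Or.inr (lt_of_not_ge fun hdb => (add_lt_add_of_lt_of_le hca hdb).ne' h)

namespace AddMonoidAlgebra

variable {S M : Type*} [CommRing S] [AddCommMonoid M]

theorem coeff_mul_eq_sum_filter [DecidableEq M] (f g : AddMonoidAlgebra S M) (x : M) :
    (f * g).coeff x = ∑ p ∈ f.coeff.support ×ˢ g.coeff.support with p.1 + p.2 = x,
      f.coeff p.1 * g.coeff p.2 := by
  rw [coeff_mul, Finset.sum_filter, Finset.sum_product]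
  rfl

theorem coeff_mul_add_eq_add_sum_erase [DecidableEq M] (f g : AddMonoidAlgebra S M) (q r : M) :
    (f * g).coeff (q + r) = f.coeff q * g.coeff r +
      ∑ p ∈ {p ∈ f.coeff.support ×ˢ g.coeff.support | p.1 + p.2 = q + r}.erase (q, r),
        f.coeff p.1 * g.coeff p.2 := by
  have hqr : (q, r) ∉ {p ∈ f.coeff.support ×ˢ g.coeff.support | p.1 + p.2 = q + r} →
      f.coeff q * g.coeff r = 0 := by
    contrapose!
    intro hne
    simp [left_ne_zero_of_mul hne, right_ne_zero_of_mul hne]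
  rw [coeff_mul_eq_sum_filter, ← sum_insert_of_eq_zero_if_notMem hqr,
    ← add_sum_erase _ _ (mem_insert_self _ _), erase_insert_eq_erase]

noncomputable def gaussNorm (v : S → ℝ) (w : M → ℝ) (f : AddMonoidAlgebra S M) : ℝ :=
  ⨆ q, v (f.coeff q) * w q

variable (N : RingSeminorm S) {w : AddChar M ℝ}

theorem finite_range_apply_coeff_mul (f : AddMonoidAlgebra S M) :
    (Set.range fun q => N (f.coeff q) * w q).Finite := by
  refine ((f.coeff.support.finite_toSet.image fun q => N (f.coeff q) * w q).insert 0).subset ?_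
  rintro _ ⟨q, rfl⟩
  by_cases hq : f.coeff q = 0
  · simp [hq]
  · exact Or.inr ⟨q, by simpa using hq, rfl⟩

theorem le_gaussNorm (f : AddMonoidAlgebra S M) (q : M) :
    N (f.coeff q) * w q ≤ gaussNorm N w f :=
  le_ciSup (finite_range_apply_coeff_mul N f).bddAbove q

theorem exists_apply_coeff_mul_eq_gaussNorm (f : AddMonoidAlgebra S M) :
    ∃ q, N (f.coeff q) * w q = gaussNorm N w f :=
  (Set.range_nonempty _).csSup_mem (finite_range_apply_coeff_mul N f)

theorem gaussNorm_le {f : AddMonoidAlgebra S M} {c : ℝ} (h : ∀ q, N (f.coeff q) * w q ≤ c) :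
    gaussNorm N w f ≤ c :=
  ciSup_le h

theorem gaussNorm_nonneg (hw : ∀ q, 0 ≤ w q) (f : AddMonoidAlgebra S M) :
    0 ≤ gaussNorm N w f :=
  (mul_nonneg (apply_nonneg N _) (hw 0)).trans (le_gaussNorm N f 0)

variable {N}

theorem apply_mul_mul_le (hw : ∀ q, 0 ≤ w q) (a b : M) (x y : S) :
    N (x * y) * w (a + b) ≤ (N x * w a) * (N y * w b) := by
  calc N (x * y) * w (a + b) ≤ N x * N y * (w a * w b) := by
        rw [AddChar.map_add_eq_mul]
        exact mul_le_mul_of_nonneg_right (map_mul_le_mul N x y) (mul_nonneg (hw a) (hw b))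
    _ = (N x * w a) * (N y * w b) := by ring

theorem nonneg_of_apply_le (hw : ∀ q, 0 ≤ w q) {f : AddMonoidAlgebra S M} {c : ℝ}
    (hf : ∀ q, N (f.coeff q) * w q ≤ c) : 0 ≤ c :=
  (mul_nonneg (apply_nonneg N _) (hw 0)).trans (hf 0)

theorem apply_sum_coeff_mul_le (hN : IsNonarchimedean N) (hw : ∀ q, 0 ≤ w q)
    {f g : AddMonoidAlgebra S M} {cf cg : ℝ} (hf : ∀ q, N (f.coeff q) * w q ≤ cf)
    (hg : ∀ q, N (g.coeff q) * w q ≤ cg) {x : M} (T : Finset (M × M))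
    (hT : ∀ p ∈ T, p.1 + p.2 = x) :
    N (∑ p ∈ T, f.coeff p.1 * g.coeff p.2) * w x ≤ cf * cg := by
  have hcf := nonneg_of_apply_le hw hf
  refine hN.apply_sum_mul_le (map_zero N) T _ (hw x)
    (mul_nonneg hcf (nonneg_of_apply_le hw hg)) fun p hp => ?_
  rw [← hT p hp]
  exact (apply_mul_mul_le hw _ _ _ _).trans
    (mul_le_mul (hf _) (hg _) (mul_nonneg (apply_nonneg N _) (hw _)) hcf)

theorem apply_sum_coeff_mul_lt (hN : IsNonarchimedean N) (hw : ∀ q, 0 ≤ w q)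
    {f g : AddMonoidAlgebra S M} {cf cg : ℝ} (hf : ∀ q, N (f.coeff q) * w q ≤ cf)
    (hg : ∀ q, N (g.coeff q) * w q ≤ cg) (hcf : 0 < cf) (hcg : 0 < cg) {x : M}
    (T : Finset (M × M))
    (hT : ∀ p ∈ T, p.1 + p.2 = x ∧
      (N (f.coeff p.1) * w p.1 < cf ∨ N (g.coeff p.2) * w p.2 < cg)) :
    N (∑ p ∈ T, f.coeff p.1 * g.coeff p.2) * w x < cf * cg := by
  refine hN.apply_sum_mul_lt (map_zero N) T _ (hw x) (mul_pos hcf hcg) fun p hp => ?_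
  obtain ⟨hx, hlt | hlt⟩ := hT p hp <;> rw [← hx] <;>
    refine (apply_mul_mul_le hw _ _ _ _).trans_lt ?_
  · exact mul_lt_mul_of_lt_of_le_of_nonneg_of_pos hlt (hg _)
      (mul_nonneg (apply_nonneg N _) (hw _)) hcg
  · exact mul_lt_mul_of_le_of_lt_of_nonneg_of_pos (hf _) hlt
      (mul_nonneg (apply_nonneg N _) (hw _)) hcf

theorem gaussNorm_mul_le (hN : IsNonarchimedean N) (hw : ∀ q, 0 ≤ w q)
    (f g : AddMonoidAlgebra S M) : gaussNorm N w (f * g) ≤ gaussNorm N w f * gaussNorm N w g :=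
  gaussNorm_le N fun x => by
    classical
    rw [coeff_mul_eq_sum_filter]
    exact apply_sum_coeff_mul_le hN hw (le_gaussNorm N f) (le_gaussNorm N g) _
      fun p hp => (mem_filter.1 hp).2

theorem gaussNorm_pow_le (hN : IsNonarchimedean N) (hw : ∀ q, 0 ≤ w q)
    (f : AddMonoidAlgebra S M) {n : ℕ} (hn : 1 ≤ n) :
    gaussNorm N w (f ^ n) ≤ gaussNorm N w f ^ n := by
  induction n, hn using Nat.le_induction with
  | base => simp
  | succ n _ ih =>
    rw [pow_succ, pow_succ]
    exact (gaussNorm_mul_le hN hw _ _).trans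
      (mul_le_mul_of_nonneg_right ih (gaussNorm_nonneg N hw f))

section Leading

variable [LinearOrder M]

structure IsLeadingTerm (N : RingSeminorm S) (w : AddChar M ℝ) (f : AddMonoidAlgebra S M)
    (c : ℝ) (q : M) (a : S) : Prop where
  apply_le : ∀ r, N (f.coeff r) * w r ≤ c
  apply_lt : ∀ r < q, N (f.coeff r) * w r < c
  apply_sub_lt : N (f.coeff q - a) * w q < c

variable {f g : AddMonoidAlgebra S M} {c cf cg : ℝ} {q r : M} {a : S}

theorem IsLeadingTerm.pos (hw : ∀ q, 0 ≤ w q) (h : IsLeadingTerm N w f c q a) : 0 < c :=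
  (mul_nonneg (apply_nonneg N _) (hw q)).trans_lt h.apply_sub_lt

theorem IsLeadingTerm.gaussNorm_eq (hN : IsNonarchimedean N) (hw : ∀ q, 0 ≤ w q)
    (h : IsLeadingTerm N w f c q a) (ha : N a * w q = c) : gaussNorm N w f = c := by
  refine le_antisymm (gaussNorm_le N h.apply_le) ?_
  have hlt : N (f.coeff q - a) < N a :=
    lt_of_mul_lt_mul_right (ha ▸ h.apply_sub_lt) (hw q)
  have hcoeff : N (f.coeff q) = N a := by simpa using hN.add_eq_left_of_lt hlt
  calc c = N (f.coeff q) * w q := by rw [hcoeff, ha]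
    _ ≤ gaussNorm N w f := le_gaussNorm N f q

theorem exists_isLeadingTerm (hw : ∀ q, 0 ≤ w q) (f : AddMonoidAlgebra S M)
    (hf : gaussNorm N w f ≠ 0) : ∃ q, IsLeadingTerm N w f (gaussNorm N w f) q (f.coeff q) ∧
      N (f.coeff q) * w q = gaussNorm N w f := by
  classical
  have hsupp : ∀ r, N (f.coeff r) * w r = gaussNorm N w f → r ∈ f.coeff.support := by
    intro r hr
    refine Finsupp.mem_support_iff.2 fun h0 => hf ?_
    rw [← hr, h0, map_zero, zero_mul]
  set A := f.coeff.support.filter fun r => N (f.coeff r) * w r = gaussNorm N w f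
  obtain ⟨q₁, hq₁⟩ := exists_apply_coeff_mul_eq_gaussNorm N f
  have hA : A.Nonempty := ⟨q₁, mem_filter.2 ⟨hsupp q₁ hq₁, hq₁⟩⟩
  refine ⟨A.min' hA, ⟨le_gaussNorm N f, fun r hr => ?_, ?_⟩,
    (mem_filter.1 (A.min'_mem hA)).2⟩
  · refine (le_gaussNorm N f r).lt_of_ne fun hr' => ?_
    exact (A.min'_le r (mem_filter.2 ⟨hsupp r hr', hr'⟩)).not_gt hr
  · simpa using (gaussNorm_nonneg N hw f).lt_of_ne' hf

theorem IsLeadingTerm.mul [IsOrderedCancelAddMonoid M] (hN : IsNonarchimedean N)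
    (hw : ∀ q, 0 ≤ w q) (hf : IsLeadingTerm N w f cf q a)
    (hg : IsLeadingTerm N w g cg r (g.coeff r)) :
    IsLeadingTerm N w (f * g) (cf * cg) (q + r) (a * g.coeff r) := by
  classical
  have hcf := hf.pos hw
  have hcg := hg.pos hw
  refine ⟨fun x => ?_, fun x hx => ?_, ?_⟩
  · rw [coeff_mul_eq_sum_filter]
    exact apply_sum_coeff_mul_le hN hw hf.apply_le hg.apply_le _ fun p hp => (mem_filter.1 hp).2
  · rw [coeff_mul_eq_sum_filter]
    refine apply_sum_coeff_mul_lt hN hw hf.apply_le hg.apply_le hcf hcg _ fun p hp => ?_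
    have hpx := (mem_filter.1 hp).2
    exact ⟨hpx, (lt_or_lt_of_add_lt_add (hpx ▸ hx)).imp (hf.apply_lt _) (hg.apply_lt _)⟩
  rw [coeff_mul_add_eq_add_sum_erase, add_sub_right_comm, ← sub_mul]
  refine hN.apply_add_mul_lt (hw _) ?_
    (apply_sum_coeff_mul_lt hN hw hf.apply_le hg.apply_le hcf hcg _ fun p hp => ?_)
  · exact (apply_mul_mul_le hw _ _ _ _).trans_lt (mul_lt_mul_of_lt_of_le_of_nonneg_of_pos
      hf.apply_sub_lt (hg.apply_le r) (mul_nonneg (apply_nonneg N _) (hw _)) hcg)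
  · obtain ⟨hne, hp⟩ := mem_erase.1 hp
    have hpx := (mem_filter.1 hp).2
    exact ⟨hpx, (lt_or_lt_of_add_eq_add_of_ne hpx hne).imp (hf.apply_lt _) (hg.apply_lt _)⟩

theorem IsLeadingTerm.pow [IsOrderedCancelAddMonoid M] (hN : IsNonarchimedean N)
    (hw : ∀ q, 0 ≤ w q)
    (hf : IsLeadingTerm N w f c q (f.coeff q)) {n : ℕ} (hn : 1 ≤ n) :
    IsLeadingTerm N w (f ^ n) (c ^ n) (n • q) (f.coeff q ^ n) := by
  induction n, hn using Nat.le_induction with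
  | base => simpa using hf
  | succ n _ ih => simpa only [pow_succ, succ_nsmul] using ih.mul hN hw hf

theorem gaussNorm_pow [IsOrderedCancelAddMonoid M] (hN : IsNonarchimedean N) (hpow : IsPowMul N)
    (hw : ∀ q, 0 ≤ w q) (f : AddMonoidAlgebra S M) {n : ℕ} (hn : 1 ≤ n) :
    gaussNorm N w (f ^ n) = gaussNorm N w f ^ n := by
  by_cases hf : gaussNorm N w f = 0
  · have hpow_le := gaussNorm_pow_le hN hw f hn
    rw [hf, zero_pow (by omega)] at hpow_le ⊢
    exact le_antisymm hpow_le (gaussNorm_nonneg N hw _)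
  obtain ⟨q, hq, hq_eq⟩ := exists_isLeadingTerm hw f hf
  refine (hq.pow hN hw hn).gaussNorm_eq hN hw ?_
  rw [hpow _ hn, AddChar.map_nsmul_eq_pow, ← mul_pow, hq_eq]

theorem gaussNorm_mul [IsOrderedCancelAddMonoid M] (hN : IsNonarchimedean N)
    (hmul : ∀ x y, N (x * y) = N x * N y) (hw : ∀ q, 0 ≤ w q) (f g : AddMonoidAlgebra S M) :
    gaussNorm N w (f * g) = gaussNorm N w f * gaussNorm N w g := by
  by_cases hfg : gaussNorm N w f * gaussNorm N w g = 0
  · exact le_antisymm (hfg ▸ gaussNorm_mul_le hN hw f g) (hfg ▸ gaussNorm_nonneg N hw _)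
  obtain ⟨hf, hg⟩ := mul_ne_zero_iff.1 hfg
  obtain ⟨q, hq, hq_eq⟩ := exists_isLeadingTerm hw f hf
  obtain ⟨r, hr, hr_eq⟩ := exists_isLeadingTerm hw g hg
  refine (hq.mul hN hw hr).gaussNorm_eq hN hw ?_
  rw [hmul, AddChar.map_add_eq_mul, ← hq_eq, ← hr_eq]
  ring

end Leading

end AddMonoidAlgebra

/-- The additive monoid `ℤ[1/p]_{≥0}` of nonnegative `p`-power-denominator rationals,
the exponents of the perfect polynomial ring `S[T^{1/p^∞}]`. -/
def pAdicExps (p : ℕ) : AddSubmonoid ℚ where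
  carrier := {q | 0 ≤ q ∧ ∃ (n k : ℕ), q * (p : ℚ) ^ k = n}
  zero_mem' := ⟨le_refl 0, 0, 0, by simp⟩
  add_mem' := by
    rintro a b ⟨ha, n, k, hk⟩ ⟨hb, m, l, hl⟩
    refine ⟨add_nonneg ha hb, n * p ^ l + m * p ^ k, k + l, ?_⟩
    push_cast
    linear_combination (p : ℚ) ^ l * hk + (p : ℚ) ^ k * hl

theorem stmt13_general (p : ℕ) {S : Type*} [CommRing S]
    (nm : S → ℝ) (hnonneg : ∀ x, 0 ≤ nm x) (heq0 : ∀ x, nm x = 0 ↔ x = 0)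
    (hna : ∀ x y, nm (x - y) ≤ max (nm x) (nm y))
    (hpm : ∀ (x : S) (n : ℕ), 1 ≤ n → nm (x ^ n) = nm x ^ n)
    (hsm : ∀ x y, nm (x * y) ≤ nm x * nm y)
    (ρ : ℝ) (hρ0 : 0 < ρ) :
    let G : AddMonoidAlgebra S (pAdicExps p) → ℝ :=
      fun f => ⨆ q : pAdicExps p, nm (f.coeff q) * Real.rpow ρ ((q : ℚ) : ℝ)
    (∀ (f : AddMonoidAlgebra S (pAdicExps p)) (n : ℕ), 1 ≤ n → G (f ^ n) = G f ^ n) ∧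
    ((∀ x y : S, nm (x * y) = nm x * nm y) →
      ∀ f g : AddMonoidAlgebra S (pAdicExps p), G (f * g) = G f * G g) := by
  intro G
  have h0 : nm 0 = 0 := (heq0 0).2 rfl
  let N := RingSeminorm.ofApplySubLeMax nm h0 hnonneg hna hsm
  have hN : IsNonarchimedean N := isNonarchimedean_of_apply_sub_le_max h0 hnonneg hna
  let w : AddChar (pAdicExps p) ℝ :=
    { toFun := fun q => ρ ^ ((q : ℚ) : ℝ)
      map_zero_eq_one' := by simp
      map_add_eq_mul' := fun a b => by push_cast; exact Real.rpow_add hρ0 _ _ }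
  have hw : ∀ q, 0 ≤ w q := fun q => Real.rpow_nonneg hρ0.le _
  exact ⟨fun f n hn => AddMonoidAlgebra.gaussNorm_pow hN (fun x _ hn => hpm x _ hn) hw f hn,
    fun hmul => AddMonoidAlgebra.gaussNorm_mul hN hmul hw⟩

/-- The weighted Gauss norm on `S[T^{1/p^∞}]` (with `|T| = ρ`) is power-multiplicative
when the norm on `S` is, and multiplicative when the norm on `S` is. -/
theorem stmt13 (p : ℕ) (hp : p.Prime) {S : Type*} [CommRing S]
    (nm : S → ℝ) (hnonneg : ∀ x, 0 ≤ nm x) (heq0 : ∀ x, nm x = 0 ↔ x = 0)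
    (hna : ∀ x y, nm (x - y) ≤ max (nm x) (nm y))
    (hpm : ∀ (x : S) (n : ℕ), 1 ≤ n → nm (x ^ n) = nm x ^ n)
    (hsm : ∀ x y, nm (x * y) ≤ nm x * nm y)
    (ρ : ℝ) (hρ0 : 0 < ρ) (hρ1 : ρ < 1) :
    let G : AddMonoidAlgebra S (pAdicExps p) → ℝ :=
      fun f => ⨆ q : pAdicExps p, nm (f.coeff q) * Real.rpow ρ ((q : ℚ) : ℝ)
    (∀ (f : AddMonoidAlgebra S (pAdicExps p)) (n : ℕ), 1 ≤ n → G (f ^ n) = G f ^ n) ∧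
    ((∀ x y : S, nm (x * y) = nm x * nm y) →
      ∀ f g : AddMonoidAlgebra S (pAdicExps p), G (f * g) = G f * G g) :=
  stmt13_general p nm hnonneg heq0 hna hpm hsm ρ hρ0
end
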